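/- Let A ⊂ ℝ^D be a closed set with positive reach τ_A > 0, and let {B_i}_{i∈ℕ} be a countable family of closed balls, where B_i has radius r_i < τ_A for each i. If the intersection ⋂_{i∈ℕ} B_i ∩ A is nonempty, then its reach satisfies τ_{⋂_i B_i ∩ A} ≥ inf_{i∈ℕ} r_i. -/

import Mathlib

/-!
Let `z` have two nearest points `p ≠ q` in `S = ⋂ᵢ Bᵢ ∩ A`, at distance `d < rᵢ` for every `i`.
Let `m` be the midpoint of `p` and `q`, `b` a nearest point of `m` in `A` and `e = |m - b|`.
For `s < τ_A` the normal segment from `b` through `m` extends to length `s`, its endpoint `x`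
satisfies `d(x, A) = s`, so `|x - p|, |x - q| ≥ s` while `|x - m| = s - e`, and Apollonius'
theorem gives `e (2s - e) ≤ (|p - q| / 2)²`. With `s = rᵢ` this puts `b` in every ball `Bᵢ`,
and it also gives `|z - b| < d`, contradicting `b ∈ S`.

The normal segment is extended step by step, without a fixed-point theorem: if `y` lies on it at
distance `t` from `b`, a maximiser `w` of `d(·, A) - |· - y|² / 2K` has a unique nearest point `a`
because `d(w, A) < τ_A`, and the first-order condition at `w` makes `w - a` parallel to `w - y`;
this forces `|w - y| = K` and `d(w, A) = t + K`, so `w` is the point of the segment at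
distance `t + K` from `b`.
-/

open Metric Set ENNReal

noncomputable section

abbrev Euc (D : ℕ) := EuclideanSpace ℝ (Fin D)

variable {D : ℕ}

/-- The medial axis of a set `A ⊆ ℝ^D`: points having at least two nearest points on `A`. -/
def medialAxis (A : Set (Euc D)) : Set (Euc D) :=
  {z | ∃ p ∈ A, ∃ q ∈ A, p ≠ q ∧ dist p z = Metric.infDist z A ∧ dist q z = Metric.infDist z A}

/-- The reach of `A ⊆ ℝ^D` (with value `∞` when the medial axis is empty). -/
def reach (A : Set (Euc D)) : ℝ≥0∞ :=
  ⨅ z ∈ medialAxis A, ENNReal.ofReal (Metric.infDist z A)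

open Filter Topology

section MetricSpace

variable {X : Type*} [MetricSpace X]

def nearestPoints (A : Set X) (z : X) : Set X :=
  {p ∈ A | dist p z = infDist z A}

theorem nearestPoints_nonempty [ProperSpace X] {A : Set X} (hA : IsClosed A) (hne : A.Nonempty)
    (z : X) : (nearestPoints A z).Nonempty :=
  let ⟨p, hpA, hp⟩ := hA.exists_infDist_eq_dist hne z
  ⟨p, hpA, by rw [dist_comm, hp]⟩

theorem tendsto_of_mem_nearestPoints [ProperSpace X] {ι : Type*} {l : Filter ι} {A : Set X}
    (hA : IsClosed A) {u b : ι → X} {w a : X} (hu : Tendsto u l (𝓝 w))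
    (hb : ∀ i, b i ∈ nearestPoints A (u i)) (ha : nearestPoints A w ⊆ {a}) :
    Tendsto b l (𝓝 a) := by
  have hclose : ∀ δ > 0, ∀ᶠ i in l, b i ∈ A ∩ closedBall w (infDist w A + δ) := by
    intro δ hδ
    filter_upwards [hu (ball_mem_nhds w (half_pos hδ))] with i hi
    rw [mem_preimage, mem_ball] at hi
    refine ⟨(hb i).1, ?_⟩
    calc dist (b i) w ≤ dist (b i) (u i) + dist (u i) w := dist_triangle _ _ _
      _ ≤ infDist w A + dist (u i) w + dist (u i) w := by
        rw [(hb i).2]; gcongr; exact infDist_le_infDist_add_dist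
      _ ≤ infDist w A + δ := by linarith
  refine (isCompact_closedBall w (infDist w A + 1)).tendsto_nhds_of_unique_mapClusterPt
    ((hclose 1 one_pos).mono fun i hi => hi.2) fun x _ hx => ha ?_
  have hx : ∀ δ > 0, x ∈ A ∩ closedBall w (infDist w A + δ) := fun δ hδ =>
    (hA.inter isClosed_closedBall).mem_of_mapClusterPt hx (hclose δ hδ)
  refine ⟨(hx 1 one_pos).1, le_antisymm ?_ ?_⟩
  · exact le_of_forall_pos_le_add fun δ hδ => (hx δ hδ).2
  · exact dist_comm w x ▸ infDist_le_dist_of_mem (hx 1 one_pos).1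

theorem exists_infDist_le_add_sq [ProperSpace X] (A : Set X) (y : X) {K : ℝ} (hK : 0 < K) :
    ∃ w, dist w y ≤ 2 * K ∧ infDist y A + dist w y ^ 2 / (2 * K) ≤ infDist w A ∧
      ∀ᶠ u in 𝓝 w, infDist u A ≤ infDist w A + (dist u y ^ 2 - dist w y ^ 2) / (2 * K) := by
  have hF : Continuous fun u => infDist u A - dist u y ^ 2 / (2 * K) :=
    (continuous_infDist_pt A).sub (by fun_prop)
  obtain ⟨w, -, hmax⟩ := (isCompact_closedBall y (3 * K)).exists_isMaxOn
    (nonempty_closedBall.2 (by positivity)) hF.continuousOn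
  have hlow : infDist y A + dist w y ^ 2 / (2 * K) ≤ infDist w A := by
    have := hmax (mem_closedBall_self (by positivity : 0 ≤ 3 * K))
    simp only [mem_ofPred_eq, dist_self] at this
    norm_num at this
    linarith
  have hwy : dist w y ≤ 2 * K := by
    have hlip : infDist w A ≤ infDist y A + dist w y := infDist_le_infDist_add_dist
    have : dist w y ^ 2 ≤ 2 * K * dist w y := by
      rw [← div_le_iff₀' (by positivity)]; linarith
    nlinarith [dist_nonneg (x := w) (y := y)]
  refine ⟨w, hwy, hlow, ?_⟩
  filter_upwards [isOpen_ball.mem_nhds (mem_ball.2 (by linarith : dist w y < 3 * K))] with u hu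
  have := hmax (ball_subset_closedBall hu)
  simp only [mem_ofPred_eq] at this
  rw [sub_div]
  linarith

end MetricSpace

section InnerProductSpace

variable {E : Type*} [NormedAddCommGroup E] [InnerProductSpace ℝ E]

open scoped RealInnerProductSpace

theorem infDist_sq_add_le_of_mem_nearestPoints {A : Set E} {u w b : E}
    (hb : b ∈ nearestPoints A u) :
    infDist w A ^ 2 + 2 * ⟪w - b, u - w⟫ + ‖u - w‖ ^ 2 ≤ infDist u A ^ 2 := by
  have hw : infDist w A ≤ ‖w - b‖ := dist_eq_norm w b ▸ infDist_le_dist_of_mem hb.1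
  have hu : infDist u A = ‖(w - b) + (u - w)‖ := by
    rw [← hb.2, dist_comm, dist_eq_norm]; congr 1; abel
  rw [hu, norm_add_sq_real]
  gcongr
  exact infDist_nonneg

theorem inner_le_of_infDist_le [ProperSpace E] {A : Set E} (hA : IsClosed A) {w a v : E}
    (ha : nearestPoints A w = {a}) {g : E → ℝ} {g' : ℝ} (hg : HasLineDerivAt ℝ g g' w v)
    (hle : ∀ᶠ u in 𝓝 w, infDist u A ≤ g u) (hgw : g w = infDist w A) :
    ⟪w - a, v⟫ ≤ infDist w A * g' := by
  have hAne : A.Nonempty := ⟨a, (ha ▸ mem_singleton a : a ∈ nearestPoints A w).1⟩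
  choose b hb using fun t : ℝ => nearestPoints_nonempty hA hAne (w + t • v)
  have hline : Tendsto (fun t : ℝ => w + t • v) (𝓝[>] 0) (𝓝 w) :=
    tendsto_nhdsWithin_of_tendsto_nhds <|
      (by fun_prop : Continuous fun t : ℝ => w + t • v).tendsto' 0 w (by simp)
  have hb_lim : Tendsto b (𝓝[>] 0) (𝓝 a) := tendsto_of_mem_nearestPoints hA hline hb ha.subset
  have hslope := (hg.pow 2).tendsto_slope_zero_right
  simp only [zero_add, zero_smul, add_zero, Pi.pow_apply, hgw, smul_eq_mul] at hslope
  have hlow : ∀ᶠ t in 𝓝[>] 0, 2 * ⟪w - b t, v⟫ + t * ‖v‖ ^ 2 ≤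
      t⁻¹ * (g (w + t • v) ^ 2 - infDist w A ^ 2) := by
    filter_upwards [hline.eventually hle, self_mem_nhdsWithin] with t ht (htpos : 0 < t)
    have h := infDist_sq_add_le_of_mem_nearestPoints (w := w) (hb t)
    simp only [add_sub_cancel_left, inner_smul_right, norm_smul, Real.norm_eq_abs,
      abs_of_pos htpos] at h
    rw [le_inv_mul_iff₀ htpos]
    nlinarith [infDist_nonneg (x := w + t • v) (s := A)]
  have hleft : Tendsto (fun t => 2 * ⟪w - b t, v⟫ + t * ‖v‖ ^ 2) (𝓝[>] 0)
      (𝓝 (2 * ⟪w - a, v⟫ + 0 * ‖v‖ ^ 2)) := by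
    refine ((tendsto_const_nhds.sub hb_lim).inner tendsto_const_nhds).const_mul 2 |>.add ?_
    exact (tendsto_nhdsWithin_of_tendsto_nhds tendsto_id).mul_const _
  have := le_of_tendsto_of_tendsto hleft hslope hlow
  norm_num at this
  linarith

theorem smul_sub_eq_of_infDist_le [ProperSpace E] {A : Set E} (hA : IsClosed A) {w a y : E}
    (ha : nearestPoints A w = {a}) {K : ℝ} (hK : 0 < K)
    (hle : ∀ᶠ u in 𝓝 w, infDist u A ≤ infDist w A + (‖u - y‖ ^ 2 - ‖w - y‖ ^ 2) / (2 * K)) :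
    K • (w - a) = infDist w A • (w - y) := by
  set g := fun u => infDist w A + (‖u - y‖ ^ 2 - ‖w - y‖ ^ 2) / (2 * K)
  have hg (v : E) : HasLineDerivAt ℝ g (⟪w - y, v⟫ / K) w v := by
    have := (((((hasDerivAt_id (0 : ℝ)).smul_const v).const_add w).sub_const y).norm_sq.sub_const
      (‖w - y‖ ^ 2) |>.div_const (2 * K)).const_add (infDist w A)
    exact this.congr_deriv (by simp; field_simp)
  have hineq (v : E) : ⟪K • (w - a) - infDist w A • (w - y), v⟫ ≤ 0 := by
    have := inner_le_of_infDist_le hA ha (hg v) hle (by simp [g])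
    rw [inner_sub_left, real_inner_smul_left, real_inner_smul_left]
    rw [mul_div_assoc', le_div_iff₀ hK] at this
    linarith
  rw [← sub_eq_zero, ← inner_self_eq_zero (𝕜 := ℝ)]
  exact le_antisymm (hineq _) real_inner_self_nonneg

theorem mem_closedBall_of_dist_midpoint_le {c p q x : E} {r e : ℝ} (hp : p ∈ closedBall c r)
    (hq : q ∈ closedBall c r) (hx : dist x (midpoint ℝ p q) ≤ e) (her : e ≤ r)
    (he : e * (2 * r - e) ≤ (dist p q / 2) ^ 2) : x ∈ closedBall c r := by
  have hap :=
    EuclideanGeometry.dist_sq_add_dist_sq_eq_two_mul_dist_midpoint_sq_add_half_dist_sq c p q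
  rw [mem_closedBall, dist_comm] at hp hq
  have hcm : dist c (midpoint ℝ p q) ≤ r - e := by
    refine (pow_le_pow_iff_left₀ dist_nonneg (sub_nonneg.2 her) two_ne_zero).1 ?_
    nlinarith [dist_nonneg (x := c) (y := p), dist_nonneg (x := c) (y := q)]
  rw [mem_closedBall]
  linarith [dist_triangle_right x c (midpoint ℝ p q)]

theorem dist_lt_of_dist_midpoint_le {z p q x : E} {d e s : ℝ} (hp : dist p z = d)
    (hq : dist q z = d) (hpq : p ≠ q) (hx : dist x (midpoint ℝ p q) ≤ e)
    (he_le : e ≤ dist p q / 2) (hds : d < s) (he : e * (2 * s - e) ≤ (dist p q / 2) ^ 2) :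
    dist z x < d := by
  have hap :=
    EuclideanGeometry.dist_sq_add_dist_sq_eq_two_mul_dist_midpoint_sq_add_half_dist_sq z p q
  rw [dist_comm z p, dist_comm z q, hp, hq] at hap
  have hpq_pos : 0 < dist p q := dist_pos.2 hpq
  have hpq_le : dist p q ≤ 2 * d := by linarith [dist_triangle_right p q z]
  have hkey : e * (2 * d - e) < (dist p q / 2) ^ 2 := by
    rcases (dist_nonneg.trans hx).eq_or_lt with he0 | he0
    · rw [← he0, zero_mul]; positivity
    · nlinarith [mul_pos he0 (sub_pos.2 hds)]
  have hzm : dist z (midpoint ℝ p q) < d - e := by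
    refine (pow_lt_pow_iff_left₀ dist_nonneg (by linarith) two_ne_zero).1 ?_
    nlinarith
  linarith [dist_triangle z (midpoint ℝ p q) x, dist_comm x (midpoint ℝ p q)]

end InnerProductSpace

theorem nearestPoints_subsingleton_of_lt_reach {A : Set (Euc D)} {z : Euc D}
    (h : ENNReal.ofReal (infDist z A) < reach A) : (nearestPoints A z).Subsingleton := by
  intro p hp q hq
  by_contra hpq
  exact (iInf₂_le z ⟨p, hp.1, q, hq.1, hpq, hp.2, hq.2⟩ : reach A ≤ _).not_gt h

theorem exists_infDist_eq_add_of_lt_reach {A : Set (Euc D)} (hA : IsClosed A) (hAne : A.Nonempty)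
    {y : Euc D} {K : ℝ} (hK : 0 < K) (hKy : K ≤ infDist y A)
    (hreach : ENNReal.ofReal (infDist y A + 2 * K) < reach A) :
    ∃ w, dist w y = K ∧ infDist w A = infDist y A + K := by
  obtain ⟨w, hwy, hlow, hle⟩ := exists_infDist_le_add_sq A y hK
  set t := infDist y A
  set e := infDist w A
  have hlip : e ≤ t + dist w y := infDist_le_infDist_add_dist
  obtain ⟨a, ha_mem⟩ := nearestPoints_nonempty hA hAne w
  have ha := (subsingleton_iff_singleton ha_mem).mp <| nearestPoints_subsingleton_of_lt_reach <|
    (ENNReal.ofReal_le_ofReal (by linarith)).trans_lt hreach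
  have hwa : ‖w - a‖ = e := by rw [← dist_eq_norm, dist_comm, ha_mem.2]
  have hfoc : K • (w - a) = e • (w - y) :=
    smul_sub_eq_of_infDist_le hA ha hK (by simpa only [dist_eq_norm] using hle)
  have he_pos : 0 < e := by
    have : 0 ≤ dist w y ^ 2 / (2 * K) := by positivity
    linarith
  have hwy' : ‖w - y‖ = K := by
    have := congrArg norm hfoc
    rw [norm_smul, norm_smul, Real.norm_of_nonneg hK.le, Real.norm_of_nonneg he_pos.le, hwa,
      mul_comm] at this
    exact (mul_left_cancel₀ he_pos.ne' this).symm
  have hlow' : t + K / 2 ≤ e := by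
    rwa [dist_eq_norm, hwy', show K ^ 2 / (2 * K) = K / 2 by field_simp] at hlow
  -- `K ≤ t` gives `K < e`: seen from `w`, the nearest point `a` lies beyond `y`.
  have hya : ‖y - a‖ = e - K := by
    have hyw : e • (y - a) = (e - K) • (w - a) := by
      rw [sub_smul, hfoc]
      module
    have := congrArg norm hyw
    rw [norm_smul, norm_smul, Real.norm_of_nonneg he_pos.le, Real.norm_of_nonneg (by linarith),
      hwa, mul_comm] at this
    exact mul_right_cancel₀ he_pos.ne' this
  have hta : t ≤ ‖y - a‖ := by rw [← dist_eq_norm]; exact infDist_le_dist_of_mem ha_mem.1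
  refine ⟨w, by rw [dist_eq_norm, hwy'], ?_⟩
  rw [dist_eq_norm, hwy'] at hlip
  linarith

theorem infDist_add_smul_eq_add_of_lt_reach {A : Set (Euc D)} (hA : IsClosed A) {b n : Euc D}
    (hb : b ∈ A) (hn : ‖n‖ = 1) {t K : ℝ} (hK : 0 < K) (hKt : K ≤ t)
    (hy : infDist (b + t • n) A = t) (hreach : ENNReal.ofReal (t + 2 * K) < reach A) :
    infDist (b + (t + K) • n) A = t + K := by
  set y := b + t • n
  obtain ⟨w, hwy, hw⟩ :=
    exists_infDist_eq_add_of_lt_reach hA ⟨b, hb⟩ hK (hy ▸ hKt) (by rwa [hy])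
  rw [hy] at hw
  have hyb : y - b = t • n := add_sub_cancel_left b _
  have hyb' : ‖y - b‖ = t := by
    rw [hyb, norm_smul, hn, mul_one, Real.norm_of_nonneg (hK.trans_le hKt).le]
  have hsum : ‖(w - y) + (y - b)‖ = ‖w - y‖ + ‖y - b‖ := by
    refine le_antisymm (norm_add_le _ _) ?_
    rw [← dist_eq_norm, hwy, hyb', sub_add_sub_cancel, ← dist_eq_norm, add_comm, ← hw]
    exact infDist_le_dist_of_mem hb
  have hwyn : w - y = K • n := by
    have := norm_add_eq_iff_real.mp hsum
    rw [hyb', ← dist_eq_norm, hwy, hyb, smul_comm] at this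
    exact smul_right_injective _ (hK.trans_le hKt).ne' this
  rw [add_smul, ← add_assoc, ← hwyn, add_sub_cancel, hw]

theorem infDist_add_smul_eq_of_lt_reach {A : Set (Euc D)} (hA : IsClosed A) {b n : Euc D}
    (hb : b ∈ A) (hn : ‖n‖ = 1) {e s : ℝ} (he : 0 < e) (hes : e ≤ s) (hm : infDist (b + e • n) A = e)
    (hs : ENNReal.ofReal s < reach A) : infDist (b + s • n) A = s := by
  set T := {t : ℝ | infDist (b + t • n) A = t}
  have hT : IsClosed (T ∩ Icc e s) :=
    (isClosed_eq ((continuous_infDist_pt A).comp (by fun_prop)) continuous_id).inter isClosed_Icc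
  refine hT.Icc_subset_of_forall_exists_gt hm (fun t ⟨htT, het, hts⟩ u hu => ?_) ⟨hes, le_rfl⟩
  set K := min (min ((s - t) / 2) (u - t)) t
  have hK : 0 < K := lt_min (lt_min (by linarith) (sub_pos.2 hu)) (he.trans_le het)
  have hK₁ : K ≤ (s - t) / 2 := (min_le_left _ _).trans (min_le_left _ _)
  have hK₂ : K ≤ u - t := (min_le_left _ _).trans (min_le_right _ _)
  refine ⟨t + K, ?_, by linarith, by linarith⟩
  exact infDist_add_smul_eq_add_of_lt_reach hA hb hn hK (min_le_right _ _) htT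
    ((ENNReal.ofReal_le_ofReal (by linarith)).trans_lt hs)

theorem infDist_midpoint_mul_le {A : Set (Euc D)} (hA : IsClosed A) {p q : Euc D} (hp : p ∈ A)
    (hq : q ∈ A) {s : ℝ} (hs : ENNReal.ofReal s < reach A)
    (hms : infDist (midpoint ℝ p q) A ≤ s) :
    infDist (midpoint ℝ p q) A * (2 * s - infDist (midpoint ℝ p q) A) ≤ (dist p q / 2) ^ 2 := by
  set m := midpoint ℝ p q
  set e := infDist m A
  rcases (infDist_nonneg : 0 ≤ e).eq_or_lt with he | he
  · rw [show e = 0 from he.symm, zero_mul]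
    positivity
  obtain ⟨b, hb⟩ := nearestPoints_nonempty hA ⟨p, hp⟩ m
  set n := e⁻¹ • (m - b)
  have hmb : ‖m - b‖ = e := by rw [← dist_eq_norm, dist_comm, hb.2]
  have hn : ‖n‖ = 1 := by
    rw [norm_smul, hmb, norm_inv, Real.norm_of_nonneg he.le, inv_mul_cancel₀ he.ne']
  have hm : b + e • n = m := by rw [smul_smul, mul_inv_cancel₀ he.ne', one_smul, add_sub_cancel]
  have hx := infDist_add_smul_eq_of_lt_reach hA hb.1 hn he hms (by rw [hm]) hs
  set x := b + s • n
  have hxm : dist x m = s - e := by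
    rw [← hm, dist_eq_norm, add_sub_add_left_eq_sub, ← sub_smul, norm_smul, hn, mul_one,
      Real.norm_of_nonneg (by linarith)]
  have hxp : s ≤ dist x p := hx ▸ infDist_le_dist_of_mem hp
  have hxq : s ≤ dist x q := hx ▸ infDist_le_dist_of_mem hq
  have hap :=
    EuclideanGeometry.dist_sq_add_dist_sq_eq_two_mul_dist_midpoint_sq_add_half_dist_sq x p q
  rw [hxm] at hap
  nlinarith

theorem reach_inter_balls_countable_general (A : Set (Euc D)) (hA : IsClosed A)
    (c : ℕ → Euc D) (r : ℕ → ℝ)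
    (hr : ∀ i, ENNReal.ofReal (r i) < reach A) :
    (⨅ i, ENNReal.ofReal (r i)) ≤ reach ((⋂ i, Metric.closedBall (c i) (r i)) ∩ A) := by
  set S := (⋂ i, closedBall (c i) (r i)) ∩ A
  refine le_iInf₂ fun z ⟨p, hpS, q, hqS, hpq, hpz, hqz⟩ => le_of_not_gt fun hlt => ?_
  set d := infDist z S
  have hdr (i : ℕ) : d < r i := (ENNReal.ofReal_lt_ofReal_iff'.1 (hlt.trans_le (iInf_le _ i))).1
  set m := midpoint ℝ p q
  have hmA : infDist m A ≤ dist p q / 2 := by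
    refine (infDist_le_dist_of_mem hpS.2).trans_eq ?_
    rw [dist_midpoint_left]
    norm_num
    ring
  have hpq_le : dist p q / 2 ≤ d := by linarith [dist_triangle_right p q z]
  have hcvx (i : ℕ) := infDist_midpoint_mul_le hA hpS.2 hqS.2 (hr i) (by linarith [hdr i])
  obtain ⟨b, hbA, hbm⟩ := nearestPoints_nonempty hA ⟨p, hpS.2⟩ m
  have hbS : b ∈ S := ⟨mem_iInter.2 fun i => mem_closedBall_of_dist_midpoint_le
    (mem_iInter.1 hpS.1 i) (mem_iInter.1 hqS.1 i) hbm.le (by linarith [hdr i]) (hcvx i), hbA⟩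
  exact (dist_lt_of_dist_midpoint_le hpz hqz hpq hbm.le hmA (hdr 0) (hcvx 0)).not_ge
    (infDist_le_dist_of_mem hbS)

/-- Lemma `lem:geometry_reach_intersection_balls` (ii).
If `A` is closed with reach `τ_A > 0` and `{B_i}_{i ∈ ℕ}` is a countable family of closed
balls of radii `r_i < τ_A` such that `⋂_i B_i ∩ A ≠ ∅`, then
`τ_{⋂_i B_i ∩ A} ≥ inf_i r_i`. -/
theorem reach_inter_balls_countable (A : Set (Euc D)) (hA : IsClosed A) (h₀ : 0 < reach A)
    (c : ℕ → Euc D) (r : ℕ → ℝ)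
    (hr : ∀ i, ENNReal.ofReal (r i) < reach A)
    (hne : ((⋂ i, Metric.closedBall (c i) (r i)) ∩ A).Nonempty) :
    (⨅ i, ENNReal.ofReal (r i)) ≤ reach ((⋂ i, Metric.closedBall (c i) (r i)) ∩ A) :=
  reach_inter_balls_countable_general A hA c r hr

end
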